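/- Suppose that the NBDSA principle holds. Then for every t ∈ [0,T], D(t,T)·1_{{τ ≤ t}} = 0 P-a.s. -/

import Mathlib

/-!
If `D(t₀,T) ≠ 0` on `{τ ≤ t₀}` with positive probability, then at time `t₀` one can sell
`c := D(t₀,T)·1_{τ ≤ t₀}` units of `D` and buy bonds for the proceeds `c²`. This costs nothing,
and since default has already happened, `D(T,T) = 0` on `{τ ≤ t₀}`, so at `T` the position is
worth `c² e^{r(T - t₀)} ≥ 0`, positive where `c ≠ 0`: a BD-simple arbitrage.
-/

open MeasureTheory

/-- The enlarged filtration `G_t := σ(F_t ∪ I_t)`, where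
`I_t := σ({τ ≤ u} : u ∈ [0,t])`. -/
def enlarge {Ω : Type*} (F : ℝ → MeasurableSpace Ω) (τ : Ω → ℝ) (t : ℝ) :
    MeasurableSpace Ω :=
  F t ⊔ MeasurableSpace.generateFrom {A | ∃ u : ℝ, 0 ≤ u ∧ u ≤ t ∧ A = {ω | τ ω ≤ u}}

/-- The value process `V_ψ(t) = ψ^B(t)B(t,T) + ψ^D(t)D(t,T)`, with
`B(t,T) = e^{-r(T-t)}`. -/
noncomputable def BDvalue {Ω : Type*} (r T : ℝ) (D : ℝ → Ω → ℝ) (ψB ψD : ℝ → Ω → ℝ)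
    (t : ℝ) (ω : Ω) : ℝ :=
  ψB t ω * Real.exp (-(r * (T - t))) + ψD t ω * D t ω

/-- `ψ = (ψB, ψD)` is a `BD`-simple self-financing strategy. -/
def IsBDSimpleSelfFinancing {Ω : Type*} [MeasurableSpace Ω] (P : Measure Ω)
    (F : ℝ → MeasurableSpace Ω) (τ : Ω → ℝ) (D : ℝ → Ω → ℝ) (r T : ℝ)
    (ψB ψD : ℝ → Ω → ℝ) : Prop :=
  (∀ t ∈ Set.Icc (0 : ℝ) T,
    Measurable[enlarge F τ t] (ψB t) ∧ Measurable[enlarge F τ t] (ψD t)) ∧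
  ∃ (N : ℕ) (s : ℕ → ℝ) (x y : ℕ → Ω → ℝ),
    0 < N ∧ s 0 = 0 ∧ s N = T ∧
    (∀ n, n < N → s n < s (n + 1)) ∧
    (∀ n, 1 ≤ n → n ≤ N → Measurable[enlarge F τ (s (n - 1))] (x n) ∧
      Measurable[enlarge F τ (s (n - 1))] (y n)) ∧
    (∀ n, 1 ≤ n → n ≤ N → ∀ t ∈ Set.Ioc (s (n - 1)) (s n), ψB t = x n ∧ ψD t = y n) ∧
    (∀ n, n < N → ∀ᵐ ω ∂P,
      Filter.Tendsto (fun t => BDvalue r T D ψB ψD t ω)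
        (nhdsWithin (s n) (Set.Ioi (s n))) (nhds (BDvalue r T D ψB ψD (s n) ω)))

/-- The no-`BD`-simple-arbitrage (NBDSA) principle. -/
def NBDSA {Ω : Type*} [MeasurableSpace Ω] (P : Measure Ω)
    (F : ℝ → MeasurableSpace Ω) (τ : Ω → ℝ) (D : ℝ → Ω → ℝ) (r T : ℝ) : Prop :=
  ¬ ∃ ψB ψD : ℝ → Ω → ℝ, IsBDSimpleSelfFinancing P F τ D r T ψB ψD ∧
    (∀ᵐ ω ∂P, BDvalue r T D ψB ψD 0 ω = 0) ∧
    (∀ᵐ ω ∂P, 0 ≤ BDvalue r T D ψB ψD T ω) ∧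
    0 < P {ω | 0 < BDvalue r T D ψB ψD T ω}

open Filter Topology

section BDStrategies

variable {Ω : Type*}

lemma enlarge_mono (F : ℝ → MeasurableSpace Ω) (τ : Ω → ℝ) {s t : ℝ}
    (hF : F s ≤ F t) (hst : s ≤ t) : enlarge F τ s ≤ enlarge F τ t := by
  refine sup_le_sup hF (MeasurableSpace.generateFrom_mono ?_)
  rintro A ⟨u, hu0, hus, rfl⟩
  exact ⟨u, hu0, hus.trans hst, rfl⟩

lemma measurableSet_enlarge_setOf_le (F : ℝ → MeasurableSpace Ω) (τ : Ω → ℝ) {t : ℝ}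
    (ht : 0 ≤ t) : MeasurableSet[enlarge F τ t] {ω | τ ω ≤ t} :=
  le_sup_right (a := F t) _ (MeasurableSpace.measurableSet_generateFrom ⟨t, ht, le_rfl, rfl⟩)

noncomputable def holdAfter (t₀ : ℝ) (Z : Ω → ℝ) : ℝ → Ω → ℝ :=
  fun t ω => if t₀ < t then Z ω else 0

lemma holdAfter_of_le {t₀ t : ℝ} (Z : Ω → ℝ) (h : t ≤ t₀) : holdAfter t₀ Z t = 0 :=
  funext fun _ => if_neg h.not_gt

lemma holdAfter_of_lt {t₀ t : ℝ} (Z : Ω → ℝ) (h : t₀ < t) : holdAfter t₀ Z t = Z :=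
  funext fun _ => if_pos h

variable {F : ℝ → MeasurableSpace Ω} {τ : Ω → ℝ} {D : ℝ → Ω → ℝ} {r T t₀ : ℝ}

lemma BDvalue_holdAfter (X Y : Ω → ℝ) (u : ℝ) (ω : Ω) :
    BDvalue r T D (holdAfter t₀ X) (holdAfter t₀ Y) u ω =
      if t₀ < u then X ω * Real.exp (-(r * (T - u))) + Y ω * D u ω else 0 := by
  by_cases h : t₀ < u <;> simp [BDvalue, holdAfter, h]

lemma measurable_holdAfter (hF_mono : ∀ s t : ℝ, 0 ≤ s → s ≤ t → t ≤ T → F s ≤ F t)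
    (h₀ : 0 ≤ t₀) {Z : Ω → ℝ} (hZ : Measurable[enlarge F τ t₀] Z) {t : ℝ} (ht : t ≤ T) :
    Measurable[enlarge F τ t] (holdAfter t₀ Z t) := by
  unfold holdAfter
  split_ifs with h
  · exact hZ.mono (enlarge_mono F τ (hF_mono t₀ t h₀ h.le ht) h.le) le_rfl
  · exact measurable_const

lemma isBDSimpleSelfFinancing_holdAfter [MeasurableSpace Ω] (P : Measure Ω)
    (hF_mono : ∀ s t : ℝ, 0 ≤ s → s ≤ t → t ≤ T → F s ≤ F t) (h₀ : 0 < t₀) (hT : t₀ < T)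
    {X Y : Ω → ℝ} (hX : Measurable[enlarge F τ t₀] X) (hY : Measurable[enlarge F τ t₀] Y)
    (hlim : ∀ᵐ ω ∂P, Tendsto (fun u => X ω * Real.exp (-(r * (T - u))) + Y ω * D u ω)
      (𝓝[>] t₀) (𝓝 0)) :
    IsBDSimpleSelfFinancing P F τ D r T (holdAfter t₀ X) (holdAfter t₀ Y) := by
  let s : ℕ → ℝ := fun n => if n = 0 then 0 else if n = 1 then t₀ else T
  let x : ℕ → Ω → ℝ := fun n => if n = 1 then 0 else X
  let y : ℕ → Ω → ℝ := fun n => if n = 1 then 0 else Y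
  refine ⟨fun t ht => ⟨measurable_holdAfter hF_mono h₀.le hX ht.2,
    measurable_holdAfter hF_mono h₀.le hY ht.2⟩, 2, s, x, y, two_pos, rfl, rfl, ?_, ?_, ?_, ?_⟩
  · intro n hn
    interval_cases n
    exacts [h₀, hT]
  · intro n h1 h2
    interval_cases n
    exacts [⟨measurable_const, measurable_const⟩, ⟨hX, hY⟩]
  · intro n h1 h2 t ht
    interval_cases n
    · exact ⟨holdAfter_of_le X ht.2, holdAfter_of_le Y ht.2⟩
    · exact ⟨holdAfter_of_lt X ht.1, holdAfter_of_lt Y ht.1⟩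
  · intro n hn
    interval_cases n
    · refine ae_of_all _ fun ω => ?_
      rw [show s 0 = 0 from rfl, BDvalue_holdAfter, if_neg (not_lt.2 h₀.le)]
      refine tendsto_const_nhds.congr' ?_
      filter_upwards [Ioo_mem_nhdsGT h₀] with u hu
      rw [BDvalue_holdAfter, if_neg (not_lt.2 hu.2.le)]
    · filter_upwards [hlim] with ω hω
      rw [show s 1 = t₀ from rfl, BDvalue_holdAfter, if_neg (lt_irrefl _)]
      refine hω.congr' ?_
      filter_upwards [self_mem_nhdsWithin] with u hu
      rw [BDvalue_holdAfter, if_pos (Set.mem_Ioi.1 hu)]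

variable [MeasurableSpace Ω] {P : Measure Ω}

lemma NBDSA.ae_value_eq_zero {ψB ψD : ℝ → Ω → ℝ} (h : NBDSA P F τ D r T)
    (hψ : IsBDSimpleSelfFinancing P F τ D r T ψB ψD)
    (h₀ : ∀ᵐ ω ∂P, BDvalue r T D ψB ψD 0 ω = 0)
    (hT : ∀ᵐ ω ∂P, 0 ≤ BDvalue r T D ψB ψD T ω) :
    ∀ᵐ ω ∂P, BDvalue r T D ψB ψD T ω = 0 := by
  have hnull : P {ω | 0 < BDvalue r T D ψB ψD T ω} = 0 := by
    by_contra hne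
    exact h ⟨ψB, ψD, hψ, h₀, hT, pos_iff_ne_zero.2 hne⟩
  have hle : ∀ᵐ ω ∂P, ¬ 0 < BDvalue r T D ψB ψD T ω := ae_iff.2 (by simpa using hnull)
  filter_upwards [hle, hT] with ω h₁ h₂
  exact le_antisymm (not_lt.1 h₁) h₂

lemma NBDSA.ae_eq_zero_of_tendsto_mul (hNBDSA : NBDSA P F τ D r T)
    (hF_mono : ∀ s t : ℝ, 0 ≤ s → s ≤ t → t ≤ T → F s ≤ F t) (h₀ : 0 < t₀) (hT : t₀ < T)
    {c : Ω → ℝ} (hc : Measurable[enlarge F τ t₀] c) (hcD_T : ∀ ω, c ω * D T ω = 0)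
    (hcD : ∀ᵐ ω ∂P, Tendsto (fun u => c ω * D u ω) (𝓝[>] t₀) (𝓝 (c ω ^ 2))) :
    ∀ᵐ ω ∂P, c ω = 0 := by
  set X : Ω → ℝ := fun ω => c ω ^ 2 * Real.exp (r * (T - t₀))
  have hXB : ∀ ω, X ω * Real.exp (-(r * (T - t₀))) = c ω ^ 2 := fun ω => by
    simp only [X, mul_assoc, ← Real.exp_add, add_neg_cancel, Real.exp_zero, mul_one]
  have hB : Tendsto (fun u => Real.exp (-(r * (T - u)))) (𝓝[>] t₀)
      (𝓝 (Real.exp (-(r * (T - t₀))))) :=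
    ((by fun_prop : Continuous fun u => Real.exp (-(r * (T - u)))).tendsto t₀).mono_left
      nhdsWithin_le_nhds
  have hψ : IsBDSimpleSelfFinancing P F τ D r T (holdAfter t₀ X) (holdAfter t₀ (-c)) := by
    refine isBDSimpleSelfFinancing_holdAfter P hF_mono h₀ hT ((hc.pow_const 2).mul_const _)
      hc.neg ?_
    filter_upwards [hcD] with ω hω
    simpa [hXB, ← sub_eq_add_neg] using (hB.const_mul (X ω)).sub hω
  have hVT : ∀ ω, BDvalue r T D (holdAfter t₀ X) (holdAfter t₀ (-c)) T ω = X ω := fun ω => by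
    simp [BDvalue_holdAfter, hT, hcD_T]
  have hX : ∀ᵐ ω ∂P, X ω = 0 := by
    simpa only [hVT] using hNBDSA.ae_value_eq_zero hψ
      (ae_of_all _ fun ω => by simp [BDvalue_holdAfter, h₀.not_gt])
      (ae_of_all _ fun ω => (hVT ω).symm ▸ by positivity)
  filter_upwards [hX] with ω hω
  simpa [X, (Real.exp_pos _).ne'] using hω

end BDStrategies

theorem stmt16_general {Ω : Type*} [mΩ : MeasurableSpace Ω] (P : Measure Ω)
    (T r : ℝ)
    (F : ℝ → MeasurableSpace Ω)
    (hF_mono : ∀ s t : ℝ, 0 ≤ s → s ≤ t → t ≤ T → F s ≤ F t)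
    (τ : Ω → ℝ) (hτ_pos : ∀ ω, 0 < τ ω)
    (D : ℝ → Ω → ℝ)
    (hD_adapted : ∀ t ∈ Set.Icc (0 : ℝ) T, Measurable[enlarge F τ t] (D t))
    (hD_T : ∀ ω, D T ω = Set.indicator {ω' | T < τ ω'} (fun _ => (1 : ℝ)) ω)
    (hD_rc : ∀ ω, ∀ t ∈ Set.Icc (0 : ℝ) T, τ ω ≤ t →
      ContinuousWithinAt (fun t => D t ω) (Set.Ici t) t)
    (hNBDSA : NBDSA P F τ D r T) :
    ∀ t ∈ Set.Icc (0 : ℝ) T, ∀ᵐ ω ∂P,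
      D t ω * Set.indicator {ω' | τ ω' ≤ t} (fun _ => (1 : ℝ)) ω = 0 := by
  intro t₀ ⟨ht₀, ht₀T⟩
  rcases ht₀T.eq_or_lt with rfl | hlt
  · refine ae_of_all _ fun ω => ?_
    by_cases h : τ ω ≤ t₀ <;> simp [hD_T, h]
  rcases ht₀.eq_or_lt with rfl | hpos
  · exact ae_of_all _ fun ω => by simp [(hτ_pos ω).not_ge]
  set A := {ω | τ ω ≤ t₀}
  have hcD_T : ∀ ω, A.indicator (D t₀) ω * D T ω = 0 := fun ω => by
    by_cases hω : ω ∈ A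
    · simp [hD_T, (show τ ω ≤ T from le_trans hω ht₀T).not_gt]
    · simp [Set.indicator_of_notMem hω]
  have hcD : ∀ ω, Tendsto (fun u => A.indicator (D t₀) ω * D u ω) (𝓝[>] t₀)
      (𝓝 (A.indicator (D t₀) ω ^ 2)) := fun ω => by
    by_cases hω : ω ∈ A
    · simp only [Set.indicator_of_mem hω, sq]
      exact ((hD_rc ω t₀ ⟨ht₀, ht₀T⟩ hω).mono_left
        (nhdsWithin_mono _ Set.Ioi_subset_Ici_self)).const_mul _
    · simp [Set.indicator_of_notMem hω]
  have hc := hNBDSA.ae_eq_zero_of_tendsto_mul hF_mono hpos hlt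
    ((hD_adapted t₀ ⟨ht₀, ht₀T⟩).indicator (measurableSet_enlarge_setOf_le F τ ht₀))
    hcD_T (ae_of_all _ hcD)
  filter_upwards [hc] with ω hω
  by_cases h : ω ∈ A <;> simp_all [A]

/-- Suppose that the NBDSA principle holds.  Then for every `t ∈ [0,T]`,
`D(t,T)·1_{{τ ≤ t}} = 0` `P`-a.s. -/
theorem stmt16 {Ω : Type*} [mΩ : MeasurableSpace Ω] (P : Measure Ω)
    [IsProbabilityMeasure P] (T r : ℝ) (hT : 0 < T) (hr : 0 ≤ r)
    (F : ℝ → MeasurableSpace Ω)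
    (hF_mono : ∀ s t : ℝ, 0 ≤ s → s ≤ t → t ≤ T → F s ≤ F t)
    (hF_le : ∀ t ∈ Set.Icc (0 : ℝ) T, F t ≤ mΩ)
    (τ : Ω → ℝ) (hτ_pos : ∀ ω, 0 < τ ω) (hτ_meas : Measurable τ)
    (D : ℝ → Ω → ℝ)
    (hD_adapted : ∀ t ∈ Set.Icc (0 : ℝ) T, Measurable[enlarge F τ t] (D t))
    (hD_T : ∀ ω, D T ω = Set.indicator {ω' | T < τ ω'} (fun _ => (1 : ℝ)) ω)
    (hD_cont : ∀ ω, ContinuousOn (fun t => D t ω) (Set.Icc 0 T ∩ Set.Iio (τ ω)))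
    (hD_rc : ∀ ω, ∀ t ∈ Set.Icc (0 : ℝ) T, τ ω ≤ t →
      ContinuousWithinAt (fun t => D t ω) (Set.Ici t) t)
    (hNBDSA : NBDSA P F τ D r T) :
    ∀ t ∈ Set.Icc (0 : ℝ) T, ∀ᵐ ω ∂P,
      D t ω * Set.indicator {ω' | τ ω' ≤ t} (fun _ => (1 : ℝ)) ω = 0 :=
  stmt16_general (mΩ := mΩ) P T r F hF_mono τ hτ_pos D hD_adapted hD_T hD_rc hNBDSA
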